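/- For every n ≥ 2, the number T_n of orbits of the set of n-cycles in S_n under conjugation by the rotation subgroup ⟨(1 2 ... n)⟩ equals (1/n²) · Σ_{j|n} φ(j)² · j^{n/j} · (n/j)!. -/

import Mathlib

/-- The rotation `ρ = (1 2 ⋯ n)`, i.e. the permutation `i ↦ i + 1` of `ℤ/nℤ`. -/
def rho (n : ℕ) [NeZero n] : Equiv.Perm (ZMod n) := Equiv.addRight 1

/-- The (cyclic) degree of a permutation of `ℤ/nℤ`: the number of indices `i` (mod `n`)
with `ν(i) > ν(i+1)`, values compared via the natural order on `{0, …, n-1}`. -/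
def deg {n : ℕ} [NeZero n] (ν : Equiv.Perm (ZMod n)) : ℕ :=
  (Finset.univ.filter fun i : ZMod n => (ν (i + 1)).val < (ν i).val).card

/-- `ν` is an `n`-cycle: a single cycle moving all the points. -/
def IsNCycle {n : ℕ} [NeZero n] (ν : Equiv.Perm (ZMod n)) : Prop :=
  ν.IsCycle ∧ ν.support = Finset.univ

/-- The orbit of `ν` under conjugation by the rotation subgroup `⟨ρ⟩`. -/
def rotOrbit {n : ℕ} [NeZero n] (ν : Equiv.Perm (ZMod n)) : Set (Equiv.Perm (ZMod n)) :=
  {σ | ∃ j : ℤ, σ = (rho n) ^ j * ν * ((rho n) ^ j)⁻¹}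

/-- The number of orbits of the set of `n`-cycles under conjugation by `⟨ρ⟩`. -/
noncomputable def T (n : ℕ) [NeZero n] : ℕ :=
  Nat.card {S : Set (Equiv.Perm (ZMod n)) | ∃ ν, IsNCycle ν ∧ S = rotOrbit ν}

/-!
By Burnside's lemma, `n * T n` is the sum over `h ∈ ⟨ρ⟩` of the number `c h` of `n`-cycles
commuting with `h`. Counting commuting pairs in (class of `ρ`) × (class of `h`) in two ways, and
using that the centralizer of an `n`-cycle is the cyclic group it generates, gives
`c h * |class of h| = (n - 1)! * #{τ ∈ ⟨ρ⟩ | τ conjugate to h}`. Inside `⟨ρ⟩` two elements are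
conjugate iff they have the same order `d`, so the last factor is `φ d`; and `h` has cycle type
`d^(n/d)`, so its centralizer has order `d ^ (n / d) * (n / d)!`. Hence
`n * c h = φ d * d ^ (n / d) * (n / d)!`, and grouping the `h ∈ ⟨ρ⟩` by their order (there are
`φ d` of order `d`) gives the formula.
-/

open Equiv Finset Subgroup
open scoped Nat

section DoubleCounting

variable {G : Type*} [Group G]

lemma card_isConj_commute_eq_of_isConj (a : G) {b c : G} (hbc : IsConj b c) :
    Nat.card {x | IsConj a x ∧ Commute x b} = Nat.card {x | IsConj a x ∧ Commute x c} := by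
  obtain ⟨g, rfl⟩ := isConj_iff.1 hbc
  refine Nat.card_congr ((MulAut.conj g).toEquiv.subtypeEquiv fun x => ?_)
  have hx : IsConj x (g * x * g⁻¹) := isConj_iff.2 ⟨g, rfl⟩
  change _ ↔ IsConj a (g * x * g⁻¹) ∧ Commute (g * x * g⁻¹) (g * b * g⁻¹)
  rw [Commute.conj_iff]
  exact and_congr_left' ⟨fun h => h.trans hx, fun h => h.trans hx.symm⟩

-- Both sides count the commuting pairs in `(class of a) × (class of b)`.
lemma card_isConj_commute_mul_card_isConj [Finite G] (a b : G) :
    Nat.card {x | IsConj a x ∧ Commute x b} * Nat.card {y | IsConj b y} =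
      Nat.card {x | IsConj a x} * Nat.card {y | IsConj b y ∧ Commute a y} := by
  classical
  have := Fintype.ofFinite G
  have card_setOf (p : G → Prop) [DecidablePred p] : Nat.card {x | p x} = #{x | p x} := by
    rw [Nat.card_eq_card_toFinset, Set.toFinset_ofPred]
  simp only [card_setOf]
  rw [card_mul_eq_card_mul (s := {x | IsConj a x}) (t := {y | IsConj b y}) Commute
    (m := #{y | IsConj b y ∧ Commute a y}) (n := #{x | IsConj a x ∧ Commute x b})
    (fun x hx => ?_) (fun y hy => ?_), mul_comm]
  · rw [bipartiteAbove, filter_filter, ← card_setOf, ← card_setOf]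
    have hflip (c : G) : Nat.card {y | IsConj b y ∧ Commute c y} =
        Nat.card {y | IsConj b y ∧ Commute y c} :=
      Nat.card_congr (Equiv.subtypeEquivRight fun y => and_congr_right' Commute.symm_iff)
    rw [hflip, hflip]
    exact (card_isConj_commute_eq_of_isConj b ((mem_filter_univ _).1 hx)).symm
  · rw [bipartiteBelow, filter_filter, ← card_setOf, ← card_setOf]
    exact (card_isConj_commute_eq_of_isConj a ((mem_filter_univ _).1 hy)).symm

end DoubleCounting

namespace Equiv.Perm

variable {α : Type*} [Fintype α] [DecidableEq α] {ρ σ τ : Perm α}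

lemma exists_zpow_apply_eq_of_support_eq_univ (hρ : ρ.IsCycle) (hsupp : ρ.support = univ)
    (x y : α) : ∃ i : ℤ, (ρ ^ i) x = y :=
  hρ.exists_zpow_eq (mem_support.1 (hsupp ▸ mem_univ x)) (mem_support.1 (hsupp ▸ mem_univ y))

lemma commute_iff_mem_zpowers_of_support_eq_univ (hρ : ρ.IsCycle) (hsupp : ρ.support = univ) :
    Commute σ ρ ↔ σ ∈ zpowers ρ := by
  refine ⟨fun hσ => ?_, fun ⟨j, hj⟩ => hj ▸ (Commute.refl ρ).zpow_left j⟩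
  obtain ⟨x, -⟩ := hρ.nonempty_support
  obtain ⟨j, hj⟩ := exists_zpow_apply_eq_of_support_eq_univ hρ hsupp x (σ x)
  refine ⟨j, Perm.ext fun y => ?_⟩
  obtain ⟨i, rfl⟩ := exists_zpow_apply_eq_of_support_eq_univ hρ hsupp x y
  calc (ρ ^ j) ((ρ ^ i) x) = (ρ ^ i) ((ρ ^ j) x) := by
        rw [← Perm.mul_apply, ← Perm.mul_apply, ← zpow_add, ← zpow_add, add_comm]
    _ = σ ((ρ ^ i) x) := by rw [hj, ← Perm.mul_apply, ← (hσ.zpow_right i).eq, Perm.mul_apply]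

lemma eq_one_of_mem_zpowers_of_apply_eq_self (hρ : ρ.IsCycle) (hsupp : ρ.support = univ)
    (hσ : σ ∈ zpowers ρ) {x : α} (hx : σ x = x) : σ = 1 := by
  have hcomm := (commute_iff_mem_zpowers_of_support_eq_univ hρ hsupp).2 hσ
  refine Perm.ext fun y => ?_
  obtain ⟨i, rfl⟩ := exists_zpow_apply_eq_of_support_eq_univ hρ hsupp x y
  rw [← Perm.mul_apply, (hcomm.zpow_right i).eq, Perm.mul_apply, hx, Perm.one_apply]

lemma cycleType_of_mem_zpowers (hρ : ρ.IsCycle) (hsupp : ρ.support = univ)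
    (hσ : σ ∈ zpowers ρ) (hσ1 : σ ≠ 1) :
    σ.cycleType = Multiset.replicate (Fintype.card α / orderOf σ) (orderOf σ) := by
  -- A power of `σ` with a fixed point is trivial, so all cycles of `σ` have length `orderOf σ`.
  have hmem : ∀ m ∈ σ.cycleType, m = orderOf σ := by
    intro m hm
    refine Nat.dvd_antisymm (dvd_of_mem_cycleType hm) (orderOf_dvd_of_pow_eq_one ?_)
    rw [cycleType_def, Multiset.mem_map] at hm
    obtain ⟨c, hc, rfl⟩ := hm
    obtain ⟨x, hx⟩ := (mem_cycleFactorsFinset_iff.1 hc).1.nonempty_support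
    refine eq_one_of_mem_zpowers_of_apply_eq_self hρ hsupp (pow_mem hσ _) (x := x) ?_
    rw [← cycleOf_pow_apply_self, ← cycle_is_cycleOf hx hc, Function.comp_apply,
      ← (mem_cycleFactorsFinset_iff.1 hc).1.orderOf, pow_orderOf_eq_one, Perm.one_apply]
  have hsuppσ : σ.support = univ := eq_univ_of_forall fun x =>
    mem_support.2 fun hx => hσ1 (eq_one_of_mem_zpowers_of_apply_eq_self hρ hsupp hσ hx)
  have hrep := Multiset.eq_replicate.2 ⟨rfl, hmem⟩
  have hsum := sum_cycleType σ
  rw [hsuppσ, Finset.card_univ, hrep, Multiset.sum_replicate, smul_eq_mul] at hsum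
  rw [hrep, ← hsum, Nat.mul_div_cancel _ (orderOf_pos σ)]

lemma card_eq_orderOf_of_support_eq_univ (hρ : ρ.IsCycle) (hsupp : ρ.support = univ) :
    Fintype.card α = orderOf ρ := by
  rw [hρ.orderOf, hsupp, Finset.card_univ]

lemma card_isConj_mul_eq_of_mem_zpowers (hρ : ρ.IsCycle) (hsupp : ρ.support = univ)
    (hσ : σ ∈ zpowers ρ) :
    Nat.card {τ | IsConj σ τ} *
        (orderOf σ ^ (Fintype.card α / orderOf σ) * (Fintype.card α / orderOf σ)!) =
      (Fintype.card α)! := by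
  rw [← card_isConj_mul_eq σ]
  congr 1
  by_cases hσ1 : σ = 1
  · simp [hσ1]
  · have hdvd : orderOf σ ∣ Fintype.card α := by
      rw [card_eq_orderOf_of_support_eq_univ hρ hsupp]; exact orderOf_dvd_of_mem_zpowers hσ
    have hk : Fintype.card α / orderOf σ ≠ 0 := by
      rw [card_eq_orderOf_of_support_eq_univ hρ hsupp] at hdvd ⊢
      exact (Nat.div_pos (Nat.le_of_dvd (orderOf_pos ρ) hdvd) (orderOf_pos σ)).ne'
    rw [cycleType_of_mem_zpowers hρ hsupp hσ hσ1]
    simp [Multiset.toFinset_replicate, hk, Nat.div_mul_cancel hdvd]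

lemma isConj_iff_orderOf_eq_of_mem_zpowers (hρ : ρ.IsCycle) (hsupp : ρ.support = univ)
    (hσ : σ ∈ zpowers ρ) (hτ : τ ∈ zpowers ρ) : IsConj σ τ ↔ orderOf σ = orderOf τ := by
  refine ⟨fun h => ?_, fun h => ?_⟩
  · rw [← lcm_cycleType, ← lcm_cycleType, isConj_iff_cycleType_eq.1 h]
  · by_cases hσ1 : σ = 1
    · rw [hσ1, orderOf_one, eq_comm, orderOf_eq_one_iff] at h
      rw [hσ1, h]
    · have hτ1 : τ ≠ 1 := fun hτ1 => hσ1 (orderOf_eq_one_iff.1 (by rw [h, hτ1, orderOf_one]))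
      rw [isConj_iff_cycleType_eq, cycleType_of_mem_zpowers hρ hsupp hσ hσ1,
        cycleType_of_mem_zpowers hρ hsupp hτ hτ1, h]

lemma isConj_iff_isCycle_and_support_eq_univ (hρ : ρ.IsCycle) (hsupp : ρ.support = univ) :
    IsConj ρ σ ↔ σ.IsCycle ∧ σ.support = univ := by
  refine ⟨fun h => ?_, fun ⟨hσ, hσs⟩ => hρ.isConj hσ (by rw [hsupp, hσs])⟩
  rw [isConj_iff_cycleType_eq, hρ.cycleType] at h
  have hσ : σ.IsCycle := card_cycleType_eq_one.1 (by rw [← h, Multiset.card_singleton])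
  rw [hσ.cycleType, hsupp, Multiset.singleton_inj] at h
  exact ⟨hσ, eq_univ_of_card _ (by rw [← h, Finset.card_univ])⟩

lemma card_isConj_self_mul_card_eq (hρ : ρ.IsCycle) (hsupp : ρ.support = univ) :
    Nat.card {σ | IsConj ρ σ} * Fintype.card α = (Fintype.card α)! := by
  have h := card_isConj_mul_eq_of_mem_zpowers hρ hsupp (mem_zpowers ρ)
  rwa [← card_eq_orderOf_of_support_eq_univ hρ hsupp,
    Nat.div_self (card_eq_orderOf_of_support_eq_univ hρ hsupp ▸ orderOf_pos ρ), pow_one,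
    Nat.factorial_one, mul_one] at h

lemma card_isConj_commute_eq_totient (hρ : ρ.IsCycle) (hsupp : ρ.support = univ)
    (hσ : σ ∈ zpowers ρ) : Nat.card {τ | IsConj σ τ ∧ Commute ρ τ} = φ (orderOf σ) := by
  classical
  have hdvd : orderOf σ ∣ Fintype.card (zpowers ρ) := by
    rw [Fintype.card_zpowers]; exact orderOf_dvd_of_mem_zpowers hσ
  rw [← IsCyclic.card_orderOf_eq_totient hdvd, ← Fintype.card_subtype, ← Nat.card_eq_fintype_card]
  refine Nat.card_congr ((Equiv.subtypeEquivRight fun τ => ?_).trans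
    ((Equiv.subtypeSubtypeEquivSubtypeInter (· ∈ zpowers ρ) (orderOf · = orderOf σ)).symm.trans
      (Equiv.subtypeEquivRight fun a => by rw [Subgroup.orderOf_coe])))
  rw [Set.mem_ofPred_eq, Commute.symm_iff, commute_iff_mem_zpowers_of_support_eq_univ hρ hsupp,
    and_comm]
  exact and_congr_right fun hτ =>
    (isConj_iff_orderOf_eq_of_mem_zpowers hρ hsupp hσ hτ).trans eq_comm

theorem card_mul_card_isConj_commute (hρ : ρ.IsCycle) (hsupp : ρ.support = univ)
    (hσ : σ ∈ zpowers ρ) :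
    Fintype.card α * Nat.card {ν | IsConj ρ ν ∧ Commute ν σ} =
      φ (orderOf σ) *
        (orderOf σ ^ (Fintype.card α / orderOf σ) * (Fintype.card α / orderOf σ)!) := by
  have hcount := card_isConj_commute_mul_card_isConj ρ σ
  rw [card_isConj_commute_eq_totient hρ hsupp hσ] at hcount
  have hσc := card_isConj_mul_eq_of_mem_zpowers hρ hsupp hσ
  have hρc := card_isConj_self_mul_card_eq hρ hsupp
  set n := Fintype.card α
  set A := Nat.card {ν | IsConj ρ ν ∧ Commute ν σ}
  set Z := orderOf σ ^ (n / orderOf σ) * (n / orderOf σ)!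
  refine Nat.eq_of_mul_eq_mul_right (Nat.factorial_pos n) ?_
  calc n * A * n ! = n * (A * Nat.card {τ | IsConj σ τ}) * Z := by rw [← hσc]; ring
    _ = (Nat.card {ν | IsConj ρ ν} * n) * φ (orderOf σ) * Z := by rw [hcount]; ring
    _ = φ (orderOf σ) * Z * n ! := by rw [hρc]; ring

end Equiv.Perm

lemma IsCyclic.sum_orderOf_eq {G M : Type*} [Group G] [Fintype G] [IsCyclic G] [AddCommMonoid M]
    (f : ℕ → M) : ∑ g : G, f (orderOf g) = ∑ d ∈ (Fintype.card G).divisors, φ d • f d := by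
  classical
  rw [← sum_fiberwise_of_maps_to (g := orderOf) (t := (Fintype.card G).divisors)
    fun g _ => Nat.mem_divisors.2 ⟨orderOf_dvd_card, Fintype.card_ne_zero⟩]
  refine sum_congr rfl fun d hd => ?_
  rw [sum_congr rfl fun g hg => by rw [(mem_filter.1 hg).2], sum_const,
    IsCyclic.card_orderOf_eq_totient (Nat.dvd_of_mem_divisors hd)]

open Equiv.Perm

section Rotations

variable {n : ℕ} [NeZero n]

lemma rho_pow_apply (k : ℕ) (x : ZMod n) : (rho n ^ k) x = x + k := by
  induction k with
  | zero => simp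
  | succ k ih =>
    rw [pow_succ', Perm.mul_apply, ih, Nat.cast_succ, ← add_assoc]
    rfl

lemma isNCycle_rho (hn : 2 ≤ n) : IsNCycle (rho n) := by
  have : Fact (1 < n) := ⟨hn⟩
  have hmoved (x : ZMod n) : rho n x ≠ x := by simp [rho]
  refine ⟨⟨0, hmoved 0, fun y _ => ⟨(y.val : ℤ), ?_⟩⟩,
    eq_univ_of_forall fun x => Perm.mem_support.2 (hmoved x)⟩
  rw [zpow_natCast, rho_pow_apply, ZMod.natCast_zmod_val, zero_add]

lemma IsNCycle.conj {ν : Perm (ZMod n)} (hν : IsNCycle ν) (g : Perm (ZMod n)) :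
    IsNCycle (g * ν * g⁻¹) :=
  ⟨hν.1.conj, by rw [Perm.support_conj, hν.2, map_univ_equiv]⟩

abbrev NCycle (n : ℕ) [NeZero n] := {ν : Perm (ZMod n) // IsNCycle ν}

instance : MulAction (zpowers (rho n)) (NCycle n) where
  smul h ν := ⟨h * ν * h⁻¹, ν.2.conj h⟩
  one_smul ν := Subtype.ext <| by
    change ((1 : zpowers (rho n)) : Perm (ZMod n)) * ν * (1 : Perm (ZMod n))⁻¹ = ν
    simp
  mul_smul h g ν := Subtype.ext <| by
    change ((h * g : zpowers (rho n)) : Perm (ZMod n)) * ν * ((h : Perm (ZMod n)) * g)⁻¹ =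
      h * (g * ν * (g : Perm (ZMod n))⁻¹) * (h : Perm (ZMod n))⁻¹
    simp [mul_assoc]

lemma coe_rotation_smul (h : zpowers (rho n)) (ν : NCycle n) :
    ((h • ν : NCycle n) : Perm (ZMod n)) = h * ν * h⁻¹ := rfl

lemma orderOf_rho (hn : 2 ≤ n) : orderOf (rho n) = n := by
  rw [← card_eq_orderOf_of_support_eq_univ (isNCycle_rho hn).1 (isNCycle_rho hn).2, ZMod.card]

lemma rotOrbit_eq_image_orbit (ν : NCycle n) :
    rotOrbit (ν : Perm (ZMod n)) = Subtype.val '' MulAction.orbit (zpowers (rho n)) ν := by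
  ext σ
  constructor
  · rintro ⟨j, rfl⟩
    exact ⟨_, ⟨⟨rho n ^ j, j, rfl⟩, rfl⟩, rfl⟩
  · rintro ⟨_, ⟨⟨_, j, rfl⟩, rfl⟩, rfl⟩
    exact ⟨j, rfl⟩

lemma card_quotient_orbitRel_eq_T :
    Nat.card (Quotient (MulAction.orbitRel (zpowers (rho n)) (NCycle n))) = T n := by
  have hker : MulAction.orbitRel (zpowers (rho n)) (NCycle n) =
      Setoid.ker fun ν : NCycle n => rotOrbit ν.1 := by
    ext ν μ
    rw [Setoid.ker_def, rotOrbit_eq_image_orbit, rotOrbit_eq_image_orbit,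
      (Set.image_injective.2 Subtype.val_injective).eq_iff, MulAction.orbit_eq_iff,
      MulAction.orbitRel_apply]
  rw [hker, Nat.card_congr (Setoid.quotientKerEquivRange _), T]
  congr
  ext S
  simp [eq_comm]

lemma card_fixedBy_eq_card_isConj_commute (hn : 2 ≤ n) (h : zpowers (rho n)) :
    Nat.card (MulAction.fixedBy (NCycle n) h) =
      Nat.card {ν | IsConj (rho n) ν ∧ Commute ν h} := by
  have hfixed (ν : NCycle n) : ν ∈ MulAction.fixedBy (NCycle n) h ↔ Commute ν.1 h := by
    rw [MulAction.mem_fixedBy, Subtype.ext_iff, coe_rotation_smul, Subgroup.coe_inv,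
      mul_inv_eq_iff_eq_mul, Commute.symm_iff]
    rfl
  refine Nat.card_congr ((Equiv.subtypeEquivRight hfixed).trans
    ((Equiv.subtypeSubtypeEquivSubtypeInter IsNCycle (Commute · (h : Perm (ZMod n)))).trans
      (Equiv.subtypeEquivRight fun ν => ?_)))
  rw [Set.mem_ofPred_eq, isConj_iff_isCycle_and_support_eq_univ (isNCycle_rho hn).1
    (isNCycle_rho hn).2]
  rfl

lemma sum_card_isConj_commute_eq (hn : 2 ≤ n) :
    ∑ h : zpowers (rho n), Nat.card {ν | IsConj (rho n) ν ∧ Commute ν h} = T n * n := by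
  classical
  have burnside := MulAction.sum_card_fixedBy_eq_card_orbits_mul_card_group
    (zpowers (rho n)) (NCycle n)
  simpa only [← Nat.card_eq_fintype_card, card_fixedBy_eq_card_isConj_commute hn,
    card_quotient_orbitRel_eq_T, Nat.card_zpowers, orderOf_rho hn] using burnside

end Rotations

theorem stmt_13 (n : ℕ) [NeZero n] (hn : 2 ≤ n) :
    n ^ 2 * T n =
      ∑ j ∈ n.divisors, (Nat.totient j) ^ 2 * j ^ (n / j) * (n / j).factorial := by
  obtain ⟨hρ, hsupp⟩ := isNCycle_rho hn
  have hcard : Fintype.card (ZMod n) = n := ZMod.card n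
  calc n ^ 2 * T n
      = n * ∑ h : zpowers (rho n), Nat.card {ν | IsConj (rho n) ν ∧ Commute ν h} := by
        rw [sum_card_isConj_commute_eq hn]; ring
    _ = ∑ h : zpowers (rho n),
          φ (orderOf h) * (orderOf h ^ (n / orderOf h) * (n / orderOf h)!) := by
        rw [mul_sum]
        refine sum_congr rfl fun h _ => ?_
        have := card_mul_card_isConj_commute hρ hsupp h.2
        rwa [hcard, Subgroup.orderOf_coe] at this
    _ = ∑ d ∈ n.divisors, φ d • (φ d * (d ^ (n / d) * (n / d)!)) := by
        rw [IsCyclic.sum_orderOf_eq fun d => φ d * (d ^ (n / d) * (n / d)!),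
          Fintype.card_zpowers, orderOf_rho hn]
    _ = _ := sum_congr rfl fun d _ => by rw [smul_eq_mul]; ring
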